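/- Let Y be a metrizable topological vector space, H a topological vector space, and (ω_n) linear maps H → Y. Suppose f = (f_1, f_2, ...) is such that for every finite collection of nonempty open sets V_1, ..., V_s ⊆ Y, the set {n : ω_n(f_j) ∈ V_j for all j ≤ s} has upper density one. Then every nonzero finite linear combination g = a_1 f_1 + ⋯ + a_s f_s with a_s ≠ 0 satisfies: for every nonempty open V ⊆ Y, the set {n : ω_n(g) ∈ V} has upper density equal to one. -/

import Mathlib

open Filter Topology

open scoped Classical in
noncomputable def upperDensity (A : Set ℕ) : ℝ :=
  Filter.limsup (fun n => (((Finset.range n).filter (fun k => k ∈ A)).card : ℝ) / n) Filter.atTop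

open scoped Classical in
lemma upperDensity_aux_le_one (A : Set ℕ) (n : ℕ) :
    (((Finset.range n).filter (fun k => k ∈ A)).card : ℝ) / n ≤ 1 := by
  rcases Nat.eq_zero_or_pos n with h | h
  · simp [h]
  · rw [div_le_one (by exact_mod_cast h)]
    exact_mod_cast (Finset.card_filter_le _ _).trans (by simp)

open scoped Classical in
lemma upperDensity_aux_nonneg (A : Set ℕ) (n : ℕ) :
    0 ≤ (((Finset.range n).filter (fun k => k ∈ A)).card : ℝ) / n :=
  div_nonneg (by positivity) (by positivity)

open scoped Classical in
lemma upperDensity_bddAbove (A : Set ℕ) :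
    IsBoundedUnder (· ≤ ·) atTop
      (fun n => (((Finset.range n).filter (fun k => k ∈ A)).card : ℝ) / n) :=
  Filter.isBoundedUnder_of ⟨1, upperDensity_aux_le_one A⟩

open scoped Classical in
lemma upperDensity_cobdd (A : Set ℕ) :
    IsCoboundedUnder (· ≤ ·) atTop
      (fun n => (((Finset.range n).filter (fun k => k ∈ A)).card : ℝ) / n) :=
  IsBoundedUnder.isCoboundedUnder_le
    (Filter.isBoundedUnder_of ⟨0, upperDensity_aux_nonneg A⟩)

lemma upperDensity_le_one (A : Set ℕ) : upperDensity A ≤ 1 := by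
  classical
  exact Filter.limsup_le_of_le (upperDensity_cobdd A)
    (Filter.Eventually.of_forall (upperDensity_aux_le_one A))

lemma upperDensity_mono {A B : Set ℕ} (h : A ⊆ B) : upperDensity A ≤ upperDensity B := by
  classical
  refine Filter.limsup_le_limsup (Filter.Eventually.of_forall fun n => ?_)
    (upperDensity_cobdd A) (upperDensity_bddAbove B)
  rcases Nat.eq_zero_or_pos n with hn | hn
  · simp [hn]
  · apply div_le_div_of_nonneg_right ?_ (by positivity)
    exact_mod_cast Finset.card_le_card
      (Finset.monotone_filter_right _ (fun k _ hk => h hk))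

theorem upperDensity_one_of_linearCombination
    {𝔽 : Type*} [NormedField 𝔽]
    {Y : Type*} [MetricSpace Y] [AddCommGroup Y] [Module 𝔽 Y]
    [ContinuousAdd Y] [ContinuousSMul 𝔽 Y]
    (htrans : ∀ x y z : Y, dist (x + z) (y + z) = dist x y)
    {H : Type*} [AddCommGroup H] [Module 𝔽 H]
    (ω : ℕ → H →ₗ[𝔽] Y) (f : ℕ → H)
    (hf : ∀ (s : ℕ) (V : Fin s → Set Y),
      (∀ j, IsOpen (V j) ∧ (V j).Nonempty) →
      upperDensity {n | ∀ j : Fin s, ω n (f (j : ℕ)) ∈ V j} = 1)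
    (s : ℕ) (hs : 0 < s) (a : Fin s → 𝔽) (has : a ⟨s - 1, by omega⟩ ≠ 0)
    (hg : (∑ j, a j • f (j : ℕ)) ≠ 0) :
    ∀ V : Set Y, IsOpen V → V.Nonempty →
      upperDensity {n | ω n (∑ j, a j • f (j : ℕ)) ∈ V} = 1 := by
  classical
  intro V hV ⟨v, hv⟩
  set L : (Fin s → Y) → Y := fun y => ∑ j, a j • y j with hL
  have hLcont : Continuous L := by
    apply continuous_finset_sum
    intro j _
    exact (continuous_apply j).const_smul (a j)
  set y₀ : Fin s → Y := fun j => if j = ⟨s - 1, by omega⟩ then (a ⟨s - 1, by omega⟩)⁻¹ • v else 0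
    with hy₀
  have hLy₀ : L y₀ = v := by
    rw [hL]
    simp only [hy₀]
    rw [Finset.sum_eq_single (⟨s - 1, by omega⟩ : Fin s)]
    · simp [smul_smul, mul_inv_cancel₀ has]
    · intro j _ hj; simp [hj]
    · simp
  have hopen : IsOpen (L ⁻¹' V) := hV.preimage hLcont
  have hy₀mem : y₀ ∈ L ⁻¹' V := by simp [Set.mem_preimage, hLy₀, hv]
  obtain ⟨I, u, hu, hsub⟩ := isOpen_pi_iff.mp hopen y₀ hy₀mem
  set W : Fin s → Set Y := fun j => if j ∈ I then u j else Set.univ with hW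
  have hWprop : ∀ j, IsOpen (W j) ∧ (W j).Nonempty := by
    intro j
    by_cases hj : j ∈ I
    · simp only [hW, if_pos hj]
      exact ⟨(hu j hj).1, ⟨y₀ j, (hu j hj).2⟩⟩
    · simp [hW, if_neg hj]
  have hkey := hf s W hWprop
  have hsubset : {n | ∀ j : Fin s, ω n (f (j : ℕ)) ∈ W j} ⊆
      {n | ω n (∑ j, a j • f (j : ℕ)) ∈ V} := by
    intro n hn
    have hmem : (fun j : Fin s => ω n (f (j : ℕ))) ∈ (↑I : Set (Fin s)).pi u := by
      intro j hj
      have h2 : j ∈ I → ω n (f (j : ℕ)) ∈ u j := by simpa [hW] using hn j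
      exact h2 hj
    have := hsub hmem
    simp only [Set.mem_preimage, hL] at this
    have heq : ω n (∑ j, a j • f (j : ℕ)) = ∑ j, a j • ω n (f (j : ℕ)) := by
      rw [map_sum]; simp
    simpa [heq] using this
  have h1 : (1 : ℝ) ≤ upperDensity {n | ω n (∑ j, a j • f (j : ℕ)) ∈ V} := by
    rw [← hkey]; exact upperDensity_mono hsubset
  exact le_antisymm (upperDensity_le_one _) h1
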